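/- Signal-level coordination reformulation: a subset S of C × U × B × Z of size |C|·|B|·|Z| is an independent set in the reduced conflict graph (edges given only by CC2 and CC3) if and only if S satisfies: (i) every (cloud, BS, PZ) triple appears in exactly one association of S, and (ii) no user appears twice with the same power-zone index. Consequently, the optimum of the signal-level scheduling problem (maximize ∑ π over such S) equals the maximum weight of a size-|C||B||Z| independent set in the reduced conflict graph. -/
import Mathlib


open Finset

section
variable {C U B Z : Type*} [Fintype C] [Fintype U] [Fintype B] [Fintype Z]

def cloud (a : C × U × B × Z) : C := a.1
def user (a : C × U × B × Z) : U := a.2.1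
def bs (a : C × U × B × Z) : B := a.2.2.1
def pz (a : C × U × B × Z) : Z := a.2.2.2

/-- Adjacency in the conflict graph: CC1 (same user, different clouds), or
CC2 (same (cloud, BS, PZ) triple), or CC3 (same user, same PZ). -/
def Conflict (v v' : C × U × B × Z) : Prop :=
  (user v = user v' ∧ cloud v ≠ cloud v')
  ∨ (cloud v = cloud v' ∧ bs v = bs v' ∧ pz v = pz v')
  ∨ (user v = user v' ∧ pz v = pz v')

/-- `S` is an independent set of the conflict graph. -/
def IndepSet (S : Finset (C × U × B × Z)) : Prop :=
  ∀ v ∈ S, ∀ v' ∈ S, v ≠ v' → ¬ Conflict v v'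

/-- Feasibility of a hybrid schedule. -/
def Feasible (S : Finset (C × U × B × Z)) : Prop :=
  (∀ a ∈ S, ∀ a' ∈ S, a ≠ a' → ¬ (user a = user a' ∧ cloud a ≠ cloud a'))
  ∧ (∀ c : C, ∀ b : B, ∀ z : Z, ∃! u : U, (c, u, b, z) ∈ S)
  ∧ (∀ a ∈ S, ∀ a' ∈ S, a ≠ a' → ¬ (user a = user a' ∧ pz a = pz a'))

/-- Adjacency in the reduced conflict graph: CC2 or CC3 only. -/
def ConflictR (v v' : C × U × B × Z) : Prop :=
  (cloud v = cloud v' ∧ bs v = bs v' ∧ pz v = pz v')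
  ∨ (user v = user v' ∧ pz v = pz v')

def IndepSetR (S : Finset (C × U × B × Z)) : Prop :=
  ∀ v ∈ S, ∀ v' ∈ S, v ≠ v' → ¬ ConflictR v v'

/-- Feasibility for signal-level coordination: exactly one user per
(cloud, BS, PZ) triple, and no user twice on the same power-zone index. -/
def FeasibleSL (S : Finset (C × U × B × Z)) : Prop :=
  (∀ c : C, ∀ b : B, ∀ z : Z, ∃! u : U, (c, u, b, z) ∈ S)
  ∧ (∀ a ∈ S, ∀ a' ∈ S, a ≠ a' → ¬ (user a = user a' ∧ pz a = pz a'))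

lemma quad_ext {C U B Z : Type*} {a a' : C × U × B × Z}
    (h1 : a.1 = a'.1) (h2 : a.2.1 = a'.2.1) (h3 : a.2.2.1 = a'.2.2.1)
    (h4 : a.2.2.2 = a'.2.2.2) : a = a' := by
  obtain ⟨x, y, w, t⟩ := a
  obtain ⟨x', y', w', t'⟩ := a'
  simp_all

lemma aux_key {C U B Z : Type*} [Fintype C] [Fintype U] [Fintype B] [Fintype Z]
    (S : Finset (C × U × B × Z)) :
    (IndepSetR S ∧ S.card = Fintype.card C * Fintype.card B * Fintype.card Z)
      ↔ FeasibleSL S := by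
  classical
  have hcard : Fintype.card (C × B × Z)
      = Fintype.card C * Fintype.card B * Fintype.card Z := by
    simp [Fintype.card_prod, mul_assoc]
  constructor
  · rintro ⟨hI, hc⟩
    have hinj : Set.InjOn (fun a : C × U × B × Z => (a.1, a.2.2.1, a.2.2.2)) S := by
      intro a ha a' ha' h
      simp only [Prod.mk.injEq] at h
      by_contra hne
      exact hI a ha a' ha' hne (Or.inl ⟨h.1, h.2.1, h.2.2⟩)
    have himg : S.image (fun a : C × U × B × Z => (a.1, a.2.2.1, a.2.2.2))
        = Finset.univ := by
      apply Finset.eq_univ_of_card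
      rw [Finset.card_image_of_injOn hinj, hc, hcard]
    refine ⟨fun c b z => ?_, fun a ha a' ha' hne h => hI a ha a' ha' hne (Or.inr h)⟩
    have hmem : (c, b, z) ∈ S.image (fun a : C × U × B × Z => (a.1, a.2.2.1, a.2.2.2)) := by
      rw [himg]; exact Finset.mem_univ _
    obtain ⟨a, ha, hE⟩ := Finset.mem_image.mp hmem
    simp only [Prod.mk.injEq] at hE
    obtain ⟨h1, h2, h3⟩ := hE
    refine ⟨a.2.1, ?_, ?_⟩
    · have : a = (c, a.2.1, b, z) := quad_ext h1 rfl h2 h3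
      rwa [this] at ha
    · intro u hu
      by_contra hne
      exact hI _ hu _ ha (fun he => hne (congrArg (fun p => p.2.1) he))
        (Or.inl ⟨h1.symm, h2.symm, h3.symm⟩)
  · rintro ⟨h1, h2⟩
    constructor
    · intro v hv v' hv' hne hconf
      rcases hconf with ⟨hcl, hb, hz⟩ | h3
      · obtain ⟨u, _, huniq⟩ := h1 v.1 v.2.2.1 v.2.2.2
        have e1 : v = (v.1, v.2.1, v.2.2.1, v.2.2.2) := rfl
        have e2 : v' = (v.1, v'.2.1, v.2.2.1, v.2.2.2) :=
          quad_ext hcl.symm rfl hb.symm hz.symm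
        have hu1 : v.2.1 = u := huniq v.2.1 (e1 ▸ hv)
        have hu2 : v'.2.1 = u := huniq v'.2.1 (e2 ▸ hv')
        exact hne (quad_ext hcl (hu1.trans hu2.symm) hb hz)
      · exact h2 v hv v' hv' hne h3
    · rw [← hcard, ← Finset.card_univ]
      apply Finset.card_bij (fun a _ => (a.1, a.2.2.1, a.2.2.2))
      · intro a _; exact Finset.mem_univ _
      · intro a ha a' ha' hE
        simp only [Prod.mk.injEq] at hE
        obtain ⟨e1, e2, e3⟩ := hE
        obtain ⟨u, _, huniq⟩ := h1 a.1 a.2.2.1 a.2.2.2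
        have ea : a = (a.1, a.2.1, a.2.2.1, a.2.2.2) := rfl
        have ea' : a' = (a.1, a'.2.1, a.2.2.1, a.2.2.2) :=
          quad_ext e1.symm rfl e2.symm e3.symm
        have hu1 : a.2.1 = u := huniq a.2.1 (ea ▸ ha)
        have hu2 : a'.2.1 = u := huniq a'.2.1 (ea' ▸ ha')
        exact quad_ext e1 (hu1.trans hu2.symm) e2 e3
      · rintro ⟨c, b, z⟩ _
        obtain ⟨u, hu, _⟩ := h1 c b z
        exact ⟨(c, u, b, z), hu, rfl⟩

theorem signal_level_reformulation (π : C × U × B × Z → ℝ) :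
    (∀ S : Finset (C × U × B × Z),
      S.card = Fintype.card C * Fintype.card B * Fintype.card Z →
      (IndepSetR S ↔ FeasibleSL S))
    ∧ (∀ m : ℝ,
      IsGreatest {x : ℝ | ∃ S : Finset (C × U × B × Z), FeasibleSL S ∧
        x = ∑ a ∈ S, π a} m ↔
      IsGreatest {x : ℝ | ∃ S : Finset (C × U × B × Z), IndepSetR S ∧
        S.card = Fintype.card C * Fintype.card B * Fintype.card Z ∧
        x = ∑ a ∈ S, π a} m) := by
  constructor
  · intro S hc
    constructor
    · intro hI; exact (aux_key S).mp ⟨hI, hc⟩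
    · intro hF; exact (((aux_key S).mpr hF)).1
  · intro m
    have hset : {x : ℝ | ∃ S : Finset (C × U × B × Z), FeasibleSL S ∧ x = ∑ a ∈ S, π a}
        = {x : ℝ | ∃ S : Finset (C × U × B × Z), IndepSetR S ∧
            S.card = Fintype.card C * Fintype.card B * Fintype.card Z ∧
            x = ∑ a ∈ S, π a} := by
      ext x
      constructor
      · rintro ⟨S, hF, hx⟩
        obtain ⟨hI, hc⟩ := (aux_key S).mpr hF
        exact ⟨S, hI, hc, hx⟩
      · rintro ⟨S, hI, hc, hx⟩
        exact ⟨S, (aux_key S).mp ⟨hI, hc⟩, hx⟩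
    rw [hset]

end
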